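/- If orthonormalization is used, centralized and federated vertical subspace iteration are equivalent: let A be an m×N real matrix with columns indexed by the sigma type N = (s : Fin S) × Fin (n s). Define the centralized iterates by H_i := the matrix whose columns are gramSchmidtNormed applied to the columns of A * G_{i−1}, and G_i := the matrix whose columns are gramSchmidtNormed applied to the columns of Aᵀ * H_i. Suppose the federated iterates satisfy: H̃_i is the matrix whose columns are gramSchmidtNormed applied to the columns of Σ_s A^s * G̃^s_{i−1}, and the blocks G̃_i^s are obtained from (A^s)ᵀ * H̃_i by the federated Gram-Schmidt recursion with aggregated residuals and aggregated norms. If G̃^s_0 equals the site-s row-block of G_0 for all s, and at every iteration the column families being orthonormalized are linearly independent, then for all i ≥ 1 and all s: H̃_i = H_i and G̃_i^s equals the site-s row-block of G_i. -/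

import Mathlib

/-!
Gluing the site blocks of vectors `v s ∈ ℝ^{n s}` into one vector of `ℝ^N` is a linear map
under which the inner product becomes the sum over sites of the local inner products.
Hence the aggregated coefficients of the federated recursion are exactly the classical
Gram-Schmidt coefficients of the glued vectors, the glued residuals satisfy the Gram-Schmidt
recursion and so are the Gram-Schmidt vectors, and the aggregated norms are their norms.
Since moreover `Σ_s A^s G^s = A G` and `(A^s)ᵀ H` is the site-`s` block of `Aᵀ H`, one
federated iteration maps agreeing iterates to agreeing iterates.
-/

open Matrix
open scoped RealInnerProductSpace

instance finChainWellFoundedLT (k : ℕ) :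
    @IsWellFounded (Fin k) (fun a b => @LT.lt _ (@Preorder.toLT _ (@PartialOrder.toPreorder _
      (@SemilatticeInf.toPartialOrder _ (@Lattice.toSemilatticeInf _
        (@DistribLattice.toLattice _ (@instDistribLatticeOfLinearOrder _
          Fin.instLinearOrder)))))) a b) :=
  inferInstanceAs (WellFoundedLT (Fin k))

def col {a b : Type*} (M : Matrix a b ℝ) (j : b) : EuclideanSpace ℝ a :=
  WithLp.toLp 2 (fun r => M r j)

section GramSchmidt

variable {E : Type*} [NormedAddCommGroup E] [InnerProductSpace ℝ E]
variable {ι : Type*} [LinearOrder ι] [LocallyFiniteOrderBot ι] [WellFoundedLT ι]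

theorem eq_gramSchmidt_of_recursion {f v : ι → E}
    (hv : ∀ j, v j = f j - ∑ l ∈ Finset.Iio j, (⟪v l, f j⟫ / ⟪v l, v l⟫) • v l) :
    v = InnerProductSpace.gramSchmidt ℝ f := by
  funext j
  induction j using WellFoundedLT.induction with
  | _ j ih =>
    rw [hv j, sub_eq_iff_eq_add]
    nth_rw 1 [InnerProductSpace.gramSchmidt_def'' ℝ f j]
    congr 1
    refine Finset.sum_congr rfl fun l hl => ?_
    rw [ih l (Finset.mem_Iio.mp hl), real_inner_self_eq_norm_sq]
    rfl

end GramSchmidt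

section Blocks

variable {σ : Type*} {κ : σ → Type*}

def glueBlocks : ((s : σ) → EuclideanSpace ℝ (κ s)) →ₗ[ℝ] EuclideanSpace ℝ ((s : σ) × κ s) where
  toFun v := WithLp.toLp 2 fun p => v p.1 p.2
  map_add' _ _ := rfl
  map_smul' _ _ := rfl

@[simp]
theorem glueBlocks_apply (v : (s : σ) → EuclideanSpace ℝ (κ s)) (p : (s : σ) × κ s) :
    glueBlocks v p = v p.1 p.2 :=
  rfl

theorem glueBlocks_col_transpose_submatrix_mul {m k : Type*} [Fintype m]
    (A : Matrix m ((s : σ) × κ s) ℝ) (B : Matrix m k ℝ) (j : k) :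
    glueBlocks (fun s => _root_.col ((A.submatrix id (Sigma.mk s))ᵀ * B) j) =
      _root_.col (Aᵀ * B) j :=
  rfl

variable [Fintype σ] [∀ s, Fintype (κ s)]

theorem inner_glueBlocks (v w : (s : σ) → EuclideanSpace ℝ (κ s)) :
    ⟪glueBlocks v, glueBlocks w⟫ = ∑ s, ⟪v s, w s⟫ := by
  simp only [PiLp.inner_apply, glueBlocks_apply, Fintype.sum_sigma]

variable {ι : Type*} [LinearOrder ι] [LocallyFiniteOrderBot ι] [WellFoundedLT ι]

theorem glueBlocks_eq_gramSchmidt_of_federated {w u : ι → (s : σ) → EuclideanSpace ℝ (κ s)}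
    (hu : ∀ j s, u j s = w j s - ∑ l ∈ Finset.Iio j,
      ((∑ t, ⟪u l t, w j t⟫) / ∑ t, ⟪u l t, u l t⟫) • u l s) (j : ι) :
    glueBlocks (u j) = InnerProductSpace.gramSchmidt ℝ (fun j => glueBlocks (w j)) j := by
  refine congrFun (eq_gramSchmidt_of_recursion (v := fun j => glueBlocks (u j)) fun j => ?_) j
  have hblocks : u j = w j - ∑ l ∈ Finset.Iio j,
      ((∑ t, ⟪u l t, w j t⟫) / ∑ t, ⟪u l t, u l t⟫) • u l := by
    funext s
    simp only [hu j s, Pi.sub_apply, Finset.sum_apply, Pi.smul_apply]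
  simp only [hblocks, map_sub, map_sum, map_smul, inner_glueBlocks]

theorem gramSchmidtNormed_eq_of_federated {w u : ι → (s : σ) → EuclideanSpace ℝ (κ s)}
    (hu : ∀ j s, u j s = w j s - ∑ l ∈ Finset.Iio j,
      ((∑ t, ⟪u l t, w j t⟫) / ∑ t, ⟪u l t, u l t⟫) • u l s) (j : ι) (s : σ) (p : κ s) :
    InnerProductSpace.gramSchmidtNormed ℝ (fun j => glueBlocks (w j)) j ⟨s, p⟩ =
      1 / Real.sqrt (∑ t, ⟪u j t, u j t⟫) * u j s p := by
  rw [InnerProductSpace.gramSchmidtNormed, ← glueBlocks_eq_gramSchmidt_of_federated hu,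
    ← inner_glueBlocks, real_inner_self_eq_norm_sq, Real.sqrt_sq (norm_nonneg _), one_div]
  rfl

theorem sum_submatrix_mul_submatrix {m k α : Type*} [NonUnitalNonAssocSemiring α]
    (A : Matrix m ((s : σ) × κ s) α) (G : Matrix ((s : σ) × κ s) k α) :
    ∑ s, A.submatrix id (Sigma.mk s) * G.submatrix (Sigma.mk s) id = A * G := by
  ext r c
  simp only [Matrix.sum_apply, Matrix.mul_apply, Matrix.submatrix_apply, id, Fintype.sum_sigma]

end Blocks

theorem federated_subspace_iteration_eq_centralized_general (S m k : ℕ) (n : Fin S → ℕ)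
    (A : Matrix (Fin m) ((s : Fin S) × Fin (n s)) ℝ)
    (H : ℕ → Matrix (Fin m) (Fin k) ℝ)
    (G : ℕ → Matrix ((s : Fin S) × Fin (n s)) (Fin k) ℝ)
    (Ht : ℕ → Matrix (Fin m) (Fin k) ℝ)
    (Gt : ℕ → (s : Fin S) → Matrix (Fin (n s)) (Fin k) ℝ)
    -- centralized recurrences
    (hH : ∀ (i : ℕ) (r : Fin m) (c : Fin k), H (i + 1) r c =
      InnerProductSpace.gramSchmidtNormed ℝ (_root_.col (A * G i)) c r)
    (hG : ∀ (i : ℕ) (p : (s : Fin S) × Fin (n s)) (c : Fin k), G (i + 1) p c =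
      InnerProductSpace.gramSchmidtNormed ℝ (_root_.col (Aᵀ * H (i + 1))) c p)
    -- federated H-update
    (hHt : ∀ (i : ℕ) (r : Fin m) (c : Fin k), Ht (i + 1) r c =
      InnerProductSpace.gramSchmidtNormed ℝ
        (_root_.col (∑ s : Fin S, (A.submatrix id (Sigma.mk s)) * Gt i s)) c r)
    -- federated G-update: federated Gram-Schmidt recursion with aggregated residuals
    -- and aggregated norms, applied to the columns of `(A^s)ᵀ * H̃_{i+1}`
    (hGt : ∀ i : ℕ, ∃ u : Fin k → (s : Fin S) → EuclideanSpace ℝ (Fin (n s)),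
      (∀ (j : Fin k) (s : Fin S), u j s =
       _root_.col ((A.submatrix id (Sigma.mk s))ᵀ * Ht (i + 1)) j -
          ∑ l ∈ Finset.Iio j,
            ((∑ t : Fin S, ⟪u l t,_root_.col ((A.submatrix id (Sigma.mk t))ᵀ * Ht (i + 1)) j⟫) /
              (∑ t : Fin S, ⟪u l t, u l t⟫)) • u l s) ∧
      (∀ (s : Fin S) (p : Fin (n s)) (c : Fin k), Gt (i + 1) s p c =
        (1 / Real.sqrt (∑ t : Fin S, ⟪u c t, u c t⟫)) * u c s p))
    -- initialization with identical blocks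
    (hinit : ∀ s : Fin S, Gt 0 s = (G 0).submatrix (Sigma.mk s) id) :
    ∀ i : ℕ, 1 ≤ i →
      Ht i = H i ∧ ∀ s : Fin S, Gt i s = (G i).submatrix (Sigma.mk s) id := by
  have step : ∀ i, (∀ s, Gt i s = (G i).submatrix (Sigma.mk s) id) →
      Ht (i + 1) = H (i + 1) ∧ ∀ s, Gt (i + 1) s = (G (i + 1)).submatrix (Sigma.mk s) id := by
    intro i hblocks
    have hHt_eq : Ht (i + 1) = H (i + 1) := by
      ext r c
      rw [hHt, hH, funext hblocks, sum_submatrix_mul_submatrix]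
    obtain ⟨u, hu, hGt_eq⟩ := hGt i
    refine ⟨hHt_eq, fun s => ?_⟩
    ext p c
    rw [hGt_eq, ← gramSchmidtNormed_eq_of_federated hu, submatrix_apply, id, hG, ← hHt_eq]
    simp only [glueBlocks_col_transpose_submatrix_mul]
  have hblocks : ∀ i s, Gt i s = (G i).submatrix (Sigma.mk s) id := fun i => by
    induction i with
    | zero => exact hinit
    | succ i ih => exact (step i ih).2
  intro i hi
  obtain ⟨i, rfl⟩ := Nat.exists_eq_add_of_le' hi
  exact step i (hblocks i)

/-- Proposition 1: if orthonormalization is used, centralized and federated vertical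
subspace iteration are equivalent.  Centralized iterates: `H_{i+1}` orthonormalizes
(via `gramSchmidtNormed`) the columns of `A * G_i` and `G_{i+1}` orthonormalizes the
columns of `Aᵀ * H_{i+1}`.  Federated iterates: `H̃_{i+1}` orthonormalizes the columns of
`Σ_s A^s * G̃_i^s`, and the blocks `G̃_{i+1}^s` are obtained from `(A^s)ᵀ * H̃_{i+1}` by the
federated Gram-Schmidt recursion with aggregated residuals and aggregated norms.  If the
initial blocks agree and all column families being orthonormalized are linearly
independent, then for all `i ≥ 1` the iterates agree: `H̃_i = H_i` and `G̃_i^s` is the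
site-`s` row-block of `G_i`. -/
theorem federated_subspace_iteration_eq_centralized (S m k : ℕ) (n : Fin S → ℕ)
    (A : Matrix (Fin m) ((s : Fin S) × Fin (n s)) ℝ)
    (H : ℕ → Matrix (Fin m) (Fin k) ℝ)
    (G : ℕ → Matrix ((s : Fin S) × Fin (n s)) (Fin k) ℝ)
    (Ht : ℕ → Matrix (Fin m) (Fin k) ℝ)
    (Gt : ℕ → (s : Fin S) → Matrix (Fin (n s)) (Fin k) ℝ)
    -- centralized recurrences
    (hH : ∀ (i : ℕ) (r : Fin m) (c : Fin k), H (i + 1) r c =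
      InnerProductSpace.gramSchmidtNormed ℝ (_root_.col (A * G i)) c r)
    (hG : ∀ (i : ℕ) (p : (s : Fin S) × Fin (n s)) (c : Fin k), G (i + 1) p c =
      InnerProductSpace.gramSchmidtNormed ℝ (_root_.col (Aᵀ * H (i + 1))) c p)
    -- federated H-update
    (hHt : ∀ (i : ℕ) (r : Fin m) (c : Fin k), Ht (i + 1) r c =
      InnerProductSpace.gramSchmidtNormed ℝ
        (_root_.col (∑ s : Fin S, (A.submatrix id (Sigma.mk s)) * Gt i s)) c r)
    -- federated G-update: federated Gram-Schmidt recursion with aggregated residuals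
    -- and aggregated norms, applied to the columns of `(A^s)ᵀ * H̃_{i+1}`
    (hGt : ∀ i : ℕ, ∃ u : Fin k → (s : Fin S) → EuclideanSpace ℝ (Fin (n s)),
      (∀ (j : Fin k) (s : Fin S), u j s =
       _root_.col ((A.submatrix id (Sigma.mk s))ᵀ * Ht (i + 1)) j -
          ∑ l ∈ Finset.Iio j,
            ((∑ t : Fin S, ⟪u l t,_root_.col ((A.submatrix id (Sigma.mk t))ᵀ * Ht (i + 1)) j⟫) /
              (∑ t : Fin S, ⟪u l t, u l t⟫)) • u l s) ∧
      (∀ (s : Fin S) (p : Fin (n s)) (c : Fin k), Gt (i + 1) s p c =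
        (1 / Real.sqrt (∑ t : Fin S, ⟪u c t, u c t⟫)) * u c s p))
    -- the column families being orthonormalized are linearly independent
    (hLI1 : ∀ i : ℕ, LinearIndependent ℝ (_root_.col (A * G i)))
    (hLI2 : ∀ i : ℕ, LinearIndependent ℝ (_root_.col (Aᵀ * H (i + 1))))
    -- initialization with identical blocks
    (hinit : ∀ s : Fin S, Gt 0 s = (G 0).submatrix (Sigma.mk s) id) :
    ∀ i : ℕ, 1 ≤ i →
      Ht i = H i ∧ ∀ s : Fin S, Gt i s = (G i).submatrix (Sigma.mk s) id :=
  federated_subspace_iteration_eq_centralized_general S m k n A H G Ht Gt hH hG hHt hGt hinit
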